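/- arXiv:1304.0197 — 9 statements merged into one kernel-verified Lean document; each statement's English description precedes it below -/
import Mathlib

section
/- For all real numbers a₁₀, a₀₁, b₁₀, b₀₁, the quintic polynomial Q(t) = −a₀₁t⁵ + (a₁₀−b₀₁)t⁴ + (6a₀₁+b₁₀)t³ + (b₀₁−6a₁₀)t² − (a₀₁+b₁₀)t + a₁₀ has at least one real root. (In particular Q(1) = 4(a₀₁ − a₁₀) and Q(0) = a₁₀.) -/
private lemma quintic_tail_bound (c5 c4 c3 c2 c1 c0 M T : ℝ)
    (hM : |c4| + |c3| + |c2| + |c1| + |c0| ≤ M)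
    (hT1 : 1 ≤ T) (hMT : M + 1 ≤ c5 * T) :
    -c5*T^5 + c4*T^4 + c3*T^3 + c2*T^2 + c1*T + c0 < 0 := by
  have hT0 : (0:ℝ) ≤ T := by linarith
  have h40 : (0:ℝ) ≤ T^4 := pow_nonneg hT0 4
  have h14 : (1:ℝ) ≤ T^4 := one_le_pow₀ hT1
  have e3 : T^3 ≤ T^4 := pow_le_pow_right₀ hT1 (by norm_num)
  have e2 : T^2 ≤ T^4 := pow_le_pow_right₀ hT1 (by norm_num)
  have e1 : T ≤ T^4 := by
    have := pow_le_pow_right₀ hT1 (show 1 ≤ 4 by norm_num)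
    simpa using this
  have b4 : c4*T^4 ≤ |c4| * T^4 := mul_le_mul_of_nonneg_right (le_abs_self _) h40
  have b3 : c3*T^3 ≤ |c3| * T^4 := by
    calc c3*T^3 ≤ |c3| * T^3 := mul_le_mul_of_nonneg_right (le_abs_self _) (pow_nonneg hT0 3)
    _ ≤ |c3| * T^4 := mul_le_mul_of_nonneg_left e3 (abs_nonneg _)
  have b2 : c2*T^2 ≤ |c2| * T^4 := by
    calc c2*T^2 ≤ |c2| * T^2 := mul_le_mul_of_nonneg_right (le_abs_self _) (pow_nonneg hT0 2)
    _ ≤ |c2| * T^4 := mul_le_mul_of_nonneg_left e2 (abs_nonneg _)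
  have b1 : c1*T ≤ |c1| * T^4 := by
    calc c1*T ≤ |c1| * T := mul_le_mul_of_nonneg_right (le_abs_self _) hT0
    _ ≤ |c1| * T^4 := mul_le_mul_of_nonneg_left e1 (abs_nonneg _)
  have b0 : c0 ≤ |c0| * T^4 := by
    calc c0 ≤ |c0| := le_abs_self _
    _ = |c0| * 1 := (mul_one _).symm
    _ ≤ |c0| * T^4 := mul_le_mul_of_nonneg_left h14 (abs_nonneg _)
  have hlead : (M+1)*T^4 ≤ c5*T^5 := by
    calc (M+1)*T^4 ≤ (c5*T)*T^4 := mul_le_mul_of_nonneg_right hMT h40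
    _ = c5*T^5 := by ring
  nlinarith [mul_le_mul_of_nonneg_right hM h40]

/-- Algebraic core of Lemma 5: the quintic
`Q(t) = −a₀₁t⁵ + (a₁₀−b₀₁)t⁴ + (6a₀₁+b₁₀)t³ + (b₀₁−6a₁₀)t² − (a₀₁+b₁₀)t + a₁₀`
always has at least one real root; in particular `Q(1) = 4(a₀₁ − a₁₀)` and
`Q(0) = a₁₀`. -/
theorem rotation_quintic_has_real_root (a₁₀ a₀₁ b₁₀ b₀₁ : ℝ)
    (Q : ℝ → ℝ)
    (hQ : Q = fun t => -a₀₁*t^5 + (a₁₀ - b₀₁)*t^4 + (6*a₀₁ + b₁₀)*t^3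
      + (b₀₁ - 6*a₁₀)*t^2 - (a₀₁ + b₁₀)*t + a₁₀) :
    (∃ t : ℝ, Q t = 0) ∧ Q 1 = 4*(a₀₁ - a₁₀) ∧ Q 0 = a₁₀ := by
  have hcont : Continuous Q := by rw [hQ]; continuity
  have hQt : ∀ t : ℝ, Q t = -a₀₁*t^5 + (a₁₀ - b₀₁)*t^4 + (6*a₀₁ + b₁₀)*t^3
      + (b₀₁ - 6*a₁₀)*t^2 - (a₀₁ + b₁₀)*t + a₁₀ := fun t => by rw [hQ]
  refine ⟨?_, by rw [hQt]; ring, by rw [hQt]; ring⟩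
  suffices h : ∃ x y : ℝ, Q x ≤ 0 ∧ 0 ≤ Q y by
    obtain ⟨x, y, hx, hy⟩ := h
    obtain ⟨t, _, ht⟩ := intermediate_value_uIcc (a := x) (b := y) hcont.continuousOn
      (Set.mem_uIcc.2 (Or.inl ⟨hx, hy⟩))
    exact ⟨t, ht⟩
  obtain ⟨M, hMdef⟩ : ∃ M : ℝ, M = |a₁₀ - b₀₁| + |6*a₀₁ + b₁₀| + |b₀₁ - 6*a₁₀|
      + |a₀₁ + b₁₀| + |a₁₀| := ⟨_, rfl⟩
  have hM0 : 0 ≤ M := by rw [hMdef]; positivity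
  rcases lt_trichotomy a₀₁ 0 with ha | ha | ha
  · -- a₀₁ < 0 : Q(-T) ≤ 0 ≤ Q(T)
    obtain ⟨T, hTdef⟩ : ∃ T : ℝ, T = (M + 1)/(-a₀₁) + 1 := ⟨_, rfl⟩
    have hdiv : 0 ≤ (M+1)/(-a₀₁) := div_nonneg (by linarith) (by linarith)
    have hT1 : 1 ≤ T := by rw [hTdef]; linarith
    have hMT : M + 1 ≤ (-a₀₁) * T := by
      rw [hTdef, mul_add, mul_one, mul_div_cancel₀ _ (by linarith : -a₀₁ ≠ 0)]
      linarith
    refine ⟨-T, T, ?_, ?_⟩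
    · have hb := quintic_tail_bound (-a₀₁) (a₁₀ - b₀₁) (-(6*a₀₁ + b₁₀)) (b₀₁ - 6*a₁₀)
        (a₀₁ + b₁₀) a₁₀ M T (by rw [abs_neg, hMdef]) hT1 hMT
      have hq : Q (-T) = -((-a₀₁)*T^5) + (a₁₀-b₀₁)*T^4 + (-(6*a₀₁+b₁₀))*T^3
          + (b₀₁-6*a₁₀)*T^2 + (a₀₁+b₁₀)*T + a₁₀ := by rw [hQt]; ring
      rw [hq]; linarith
    · have hb := quintic_tail_bound (-a₀₁) (-(a₁₀ - b₀₁)) (-(6*a₀₁ + b₁₀)) (-(b₀₁ - 6*a₁₀))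
        (a₀₁ + b₁₀) (-a₁₀) M T (by rw [abs_neg, abs_neg, abs_neg, abs_neg, hMdef]) hT1 hMT
      have hq : Q T = -(-((-a₀₁)*T^5) + (-(a₁₀-b₀₁))*T^4 + (-(6*a₀₁+b₁₀))*T^3
          + (-(b₀₁-6*a₁₀))*T^2 + (a₀₁+b₁₀)*T + (-a₁₀)) := by rw [hQt]; ring
      rw [hq]; linarith
  · -- a₀₁ = 0
    have h0 : Q 0 = a₁₀ := by rw [hQt]; ring
    have h1 : Q 1 = -(4*a₁₀) := by rw [hQt, ha]; ring
    rcases le_total a₁₀ 0 with h | h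
    · exact ⟨0, 1, by rw [h0]; exact h, by rw [h1]; linarith⟩
    · exact ⟨1, 0, by rw [h1]; linarith, by rw [h0]; exact h⟩
  · -- a₀₁ > 0 : Q(T) ≤ 0 ≤ Q(-T)
    obtain ⟨T, hTdef⟩ : ∃ T : ℝ, T = (M + 1)/a₀₁ + 1 := ⟨_, rfl⟩
    have hdiv : 0 ≤ (M+1)/a₀₁ := div_nonneg (by linarith) (by linarith)
    have hT1 : 1 ≤ T := by rw [hTdef]; linarith
    have hMT : M + 1 ≤ a₀₁ * T := by
      rw [hTdef, mul_add, mul_one, mul_div_cancel₀ _ (by linarith : a₀₁ ≠ 0)]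
      linarith
    refine ⟨T, -T, ?_, ?_⟩
    · have hb := quintic_tail_bound a₀₁ (a₁₀ - b₀₁) (6*a₀₁ + b₁₀) (b₀₁ - 6*a₁₀)
        (-(a₀₁ + b₁₀)) a₁₀ M T (by rw [abs_neg, hMdef]) hT1 hMT
      have hq : Q T = -(a₀₁*T^5) + (a₁₀-b₀₁)*T^4 + (6*a₀₁+b₁₀)*T^3
          + (b₀₁-6*a₁₀)*T^2 + (-(a₀₁+b₁₀))*T + a₁₀ := by rw [hQt]; ring
      rw [hq]; linarith
    · have hb := quintic_tail_bound a₀₁ (-(a₁₀ - b₀₁)) (6*a₀₁ + b₁₀) (-(b₀₁ - 6*a₁₀))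
        (-(a₀₁ + b₁₀)) (-a₁₀) M T (by rw [abs_neg, abs_neg, abs_neg, abs_neg, hMdef]) hT1 hMT
      have hq : Q (-T) = -(-(a₀₁*T^5) + (-(a₁₀-b₀₁))*T^4 + (6*a₀₁+b₁₀)*T^3
          + (-(b₀₁-6*a₁₀))*T^2 + (-(a₀₁+b₁₀))*T + (-a₁₀)) := by rw [hQt]; ring
      rw [hq]; linarith
end

section
/- For all real a, b with Δ(a,b) < 0, the polynomial R_{a,b}(p) = p⁴ − 6p² + 1 + (1 − p²)(a + bp) has exactly two real roots, both simple, one in (−∞,−1) and one in (1,+∞). (This is the case of an axiumbilic point of type E₃, at which the Lie-Cartan vector field has three hyperbolic saddles on the projective line.) -/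
/-!
`Δ(a,b)` is the discriminant of the monic quartic `R_{a,b}`. Since `R_{a,b}(±1) = -4` and
`R_{a,b}` is monic, the intermediate value theorem gives a root `p₁ < -1` and a root `p₂ > 1`.
Splitting them off, `R_{a,b}(p) = (p - p₁)(p - p₂) q(p)` with `q` a monic quadratic, and the
discriminant of this product is `(p₁ - p₂)² · disc q · (q(p₁) q(p₂))²`. So `Δ(a,b) < 0` forces
`disc q < 0`: `q` has no real root, and `p₁`, `p₂` are the only roots of `R_{a,b}`, both simple.
-/

def quartic (B C D E x : ℝ) : ℝ :=
  x^4 + B*x^3 + C*x^2 + D*x + E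

/-- The discriminant of `quartic B C D E`. -/
def quarticDiscr (B C D E : ℝ) : ℝ :=
  256*E^3 - 192*B*D*E^2 - 128*C^2*E^2 + 144*C*D^2*E - 27*D^4
  + 144*B^2*C*E^2 - 6*B^2*D^2*E - 80*B*C^2*D*E + 18*B*C*D^3 + 16*C^4*E
  - 4*C^3*D^2 - 27*B^4*E^2 + 18*B^3*C*D*E - 4*B^3*D^3 - 4*B^2*C^3*E + B^2*C^2*D^2

lemma continuous_quartic (B C D E : ℝ) : Continuous (quartic B C D E) := by
  unfold quartic
  fun_prop

/-- Cauchy's bound on the real roots of a monic quartic. -/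
lemma quartic_pos_of_le_abs {B C D E x : ℝ} (hx : 1 + |B| + |C| + |D| + |E| ≤ |x|) :
    0 < quartic B C D E x := by
  set t := |x|
  have ht : 1 ≤ t := by linarith [abs_nonneg B, abs_nonneg C, abs_nonneg D, abs_nonneg E]
  have ht2 : t^2 ≤ t^3 := pow_le_pow_right₀ ht (by norm_num)
  have ht1 : t ≤ t^3 := by simpa using pow_le_pow_right₀ ht (show 1 ≤ 3 by norm_num)
  have ht0 : 1 ≤ t^3 := one_le_pow₀ ht
  have hlow : |B*x^3 + C*x^2 + D*x + E| ≤ (|B| + |C| + |D| + |E|) * t^3 := by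
    calc |B*x^3 + C*x^2 + D*x + E|
        ≤ |B*x^3| + |C*x^2| + |D*x| + |E| :=
          (abs_add_le _ _).trans (by gcongr; exact abs_add_three _ _ _)
      _ = |B| * t^3 + |C| * t^2 + |D| * t + |E| := by simp only [t, abs_mul, abs_pow]
      _ ≤ (|B| + |C| + |D| + |E|) * t^3 := by
          nlinarith [abs_nonneg B, abs_nonneg C, abs_nonneg D, abs_nonneg E]
  have htop : (|B| + |C| + |D| + |E|) * t^3 < x^4 := by
    rw [← Even.pow_abs (n := 4) (by decide) x, show |x|^4 = t * t^3 by ring]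
    nlinarith
  unfold quartic
  linarith [neg_abs_le (B*x^3 + C*x^2 + D*x + E)]

section RootsOfNeg

variable {B C D E x₀ : ℝ}

lemma exists_quartic_root_gt_of_neg (h : quartic B C D E x₀ < 0) :
    ∃ r, x₀ < r ∧ quartic B C D E r = 0 := by
  set M := 1 + |B| + |C| + |D| + |E| + |x₀|
  have hM : x₀ < M := by
    linarith [le_abs_self x₀, abs_nonneg B, abs_nonneg C, abs_nonneg D, abs_nonneg E]
  have hpos : 0 < quartic B C D E M :=
    quartic_pos_of_le_abs (le_trans (by linarith [abs_nonneg x₀]) (le_abs_self M))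
  obtain ⟨r, hr, hr0⟩ := intermediate_value_Ioo hM.le (continuous_quartic B C D E).continuousOn
    ⟨h, hpos⟩
  exact ⟨r, hr.1, hr0⟩

lemma exists_quartic_root_lt_of_neg (h : quartic B C D E x₀ < 0) :
    ∃ r, r < x₀ ∧ quartic B C D E r = 0 := by
  set M := 1 + |B| + |C| + |D| + |E| + |x₀|
  have hM : -M < x₀ := by
    linarith [neg_abs_le x₀, abs_nonneg B, abs_nonneg C, abs_nonneg D, abs_nonneg E]
  have hpos : 0 < quartic B C D E (-M) :=
    quartic_pos_of_le_abs (by rw [abs_neg]; linarith [abs_nonneg x₀, le_abs_self M])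
  obtain ⟨r, hr, hr0⟩ := intermediate_value_Ioo' hM.le (continuous_quartic B C D E).continuousOn
    ⟨h, hpos⟩
  exact ⟨r, hr.2, hr0⟩

end RootsOfNeg

section Factor

variable {r s c d : ℝ}

/-- The right-hand sides are the coefficients of `(x - r)(x - s)(x² + c x + d)`. -/
lemma exists_quartic_coeffs_eq_of_roots {B C D E : ℝ} (hrs : r ≠ s)
    (hr : quartic B C D E r = 0) (hs : quartic B C D E s = 0) :
    ∃ c d : ℝ, B = c - (r + s) ∧ C = d + r*s - c*(r + s) ∧
      D = c*(r*s) - (r + s)*d ∧ E = r*s*d := by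
  set c := B + r + s
  set d := C - r*s + c*(r + s)
  -- the quartic minus `(x - r)(x - s)(x² + c x + d)` is the linear polynomial `u x + v`
  set u := D - (c*(r*s) - (r + s)*d)
  set v := E - r*s*d
  have hur : u*r + v = 0 := by unfold quartic at hr; linear_combination hr
  have hus : u*s + v = 0 := by unfold quartic at hs; linear_combination hs
  have hu : u = 0 :=
    (mul_eq_zero.mp (by linear_combination hur - hus : u * (r - s) = 0)).resolve_right
      (sub_ne_zero.mpr hrs)
  have hv : v = 0 := by linear_combination hur - r*hu
  exact ⟨c, d, by ring, by ring, by linear_combination hu, by linear_combination hv⟩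

lemma quartic_of_factor (x : ℝ) :
    quartic (c - (r + s)) (d + r*s - c*(r + s)) (c*(r*s) - (r + s)*d) (r*s*d) x =
      (x - r) * ((x - s) * (x^2 + c*x + d)) := by
  unfold quartic; ring

lemma quarticDiscr_of_factor :
    quarticDiscr (c - (r + s)) (d + r*s - c*(r + s)) (c*(r*s) - (r + s)*d) (r*s*d) =
      (r - s)^2 * (c^2 - 4*d) * ((r^2 + c*r + d) * (s^2 + c*s + d))^2 := by
  unfold quarticDiscr; ring

end Factor

lemma deriv_sub_mul_self {g : ℝ → ℝ} {r : ℝ} (hg : DifferentiableAt ℝ g r) :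
    deriv (fun x => (x - r) * g x) r = g r := by
  have h : HasDerivAt (fun x => (x - r) * g x) (1 * g r + (r - r) * deriv g r) r :=
    ((hasDerivAt_id' r).sub_const r).mul hg.hasDerivAt
  rw [h.deriv]; ring

theorem quartic_roots_of_discr_neg {B C D E r s : ℝ} (hrs : r ≠ s)
    (hr : quartic B C D E r = 0) (hs : quartic B C D E s = 0) (hD : quarticDiscr B C D E < 0) :
    (∀ x, quartic B C D E x = 0 ↔ x = r ∨ x = s) ∧
      deriv (quartic B C D E) r ≠ 0 ∧ deriv (quartic B C D E) s ≠ 0 := by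
  obtain ⟨c, d, rfl, rfl, rfl, rfl⟩ := exists_quartic_coeffs_eq_of_roots hrs hr hs
  have hcd : c^2 - 4*d < 0 := by
    rw [quarticDiscr_of_factor] at hD
    by_contra! h
    exact hD.not_ge (mul_nonneg (mul_nonneg (sq_nonneg _) h) (sq_nonneg _))
  have hq : ∀ x, 0 < x^2 + c*x + d := fun x => by nlinarith [sq_nonneg (2*x + c)]
  have hfac : quartic (c - (r + s)) (d + r*s - c*(r + s)) (c*(r*s) - (r + s)*d) (r*s*d) =
      fun x => (x - r) * ((x - s) * (x^2 + c*x + d)) := funext quartic_of_factor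
  have hfac' : quartic (c - (r + s)) (d + r*s - c*(r + s)) (c*(r*s) - (r + s)*d) (r*s*d) =
      fun x => (x - s) * ((x - r) * (x^2 + c*x + d)) := by rw [hfac]; funext x; ring
  refine ⟨fun x => ?_, ?_, ?_⟩
  · rw [hfac]
    simp [sub_eq_zero, (hq x).ne']
  · rw [hfac, deriv_sub_mul_self (by fun_prop)]
    exact mul_ne_zero (sub_ne_zero.mpr hrs) (hq r).ne'
  · rw [hfac', deriv_sub_mul_self (by fun_prop)]
    exact mul_ne_zero (sub_ne_zero.mpr hrs.symm) (hq s).ne'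

/-- Type `E₃`: when `Δ(a,b) < 0`, the quartic
`R_{a,b}(p) = p⁴ − 6p² + 1 + (1 − p²)(a + bp)` has exactly two real roots,
both simple, one in `(−∞,−1)` and one in `(1,+∞)`. -/
theorem R_two_simple_roots_of_disc_neg (a b : ℝ) (R : ℝ → ℝ) (Δ : ℝ → ℝ → ℝ)
    (hR : R = fun p => p^4 - 6*p^2 + 1 + (1 - p^2)*(a + b*p))
    (hΔ : Δ = fun a b => 16*a^5 + 4*(b^2 + 68)*a^4 + 16*(b^2 + 144)*a^3
      - 8*(b^2 - 80)*(16 + b^2)*a^2 + 96*(16 + b^2)^2*a + 4*(16 + b^2)^3)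
    (hneg : Δ a b < 0) :
    ∃ p₁ p₂ : ℝ, p₁ < -1 ∧ 1 < p₂ ∧
      (∀ p : ℝ, R p = 0 ↔ p = p₁ ∨ p = p₂) ∧
      deriv R p₁ ≠ 0 ∧ deriv R p₂ ≠ 0 := by
  have hRq : R = quartic (-b) (-(6 + a)) b (1 + a) := by
    subst hR; funext p; unfold quartic; ring
  have hD : quarticDiscr (-b) (-(6 + a)) b (1 + a) < 0 := by
    convert hneg using 1
    subst hΔ; unfold quarticDiscr; ring
  subst hRq
  obtain ⟨p₁, hp₁, hR₁⟩ := exists_quartic_root_lt_of_neg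
    (show quartic (-b) (-(6 + a)) b (1 + a) (-1) < 0 by unfold quartic; ring_nf; norm_num)
  obtain ⟨p₂, hp₂, hR₂⟩ := exists_quartic_root_gt_of_neg
    (show quartic (-b) (-(6 + a)) b (1 + a) 1 < 0 by unfold quartic; ring_nf; norm_num)
  obtain ⟨hroots, hd₁, hd₂⟩ := quartic_roots_of_discr_neg (by linarith) hR₁ hR₂ hD
  exact ⟨p₁, p₂, hp₁, hp₂, hroots, hd₁, hd₂⟩
end

section
/- For all real a, b with Δ(a,b) > 0, the polynomial R_{a,b}(p) = p⁴ − 6p² + 1 + (1 − p²)(a + bp) has four pairwise distinct real roots. (This is the case of axiumbilic points of types E₄ and E₅, at which the Lie-Cartan vector field has five singular points on the projective line.) -/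
set_option maxHeartbeats 1000000


lemma discid (B C D E r s u v : ℝ)
    (hB : B = -(r+s+2*u)) (hC : C = r*s+2*u*(r+s)+u^2+v)
    (hD : D = -(2*u*r*s+(r+s)*(u^2+v))) (hE : E = r*s*(u^2+v)) :
    256*E^3 - 192*B*D*E^2 - 128*C^2*E^2 + 144*C*D^2*E - 27*D^4
      + 144*B^2*C*E^2 - 6*B^2*D^2*E - 80*B*C^2*D*E + 18*B*C*D^3 + 16*C^4*E
      - 4*C^3*D^2 - 27*B^4*E^2 + 18*B^3*C*D*E - 4*B^3*D^3 - 4*B^2*C^3*E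
      + B^2*C^2*D^2
    = -4*v*(r-s)^2*((r-u)^2+v)^2*((s-u)^2+v)^2 := by
  subst hB hC hD hE; ring

lemma cubic_has_root (p q t : ℝ) : ∃ x : ℝ, x^3 + p*x^2 + q*x + t = 0 := by
  have hc : Continuous fun x : ℝ => x^3 + p*x^2 + q*x + t := by continuity
  set N : ℝ := 1 + |p| + |q| + |t| with hN
  have hap := abs_nonneg p
  have haq := abs_nonneg q
  have hat := abs_nonneg t
  have hN1 : 1 ≤ N := by simp only [hN]; linarith
  have hp1 := neg_abs_le p
  have hp2 := le_abs_self p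
  have hq1 := neg_abs_le q
  have hq2 := le_abs_self q
  have ht1 := neg_abs_le t
  have ht2 := le_abs_self t
  have hNsq : (0:ℝ) ≤ N^2 := sq_nonneg N
  have hpos : (0:ℝ) ≤ N^3 + p*N^2 + q*N + t := by
    nlinarith [mul_le_mul_of_nonneg_right hp1 hNsq,
      mul_nonneg haq (by nlinarith : (0:ℝ) ≤ N^2 - N),
      mul_nonneg hat (by nlinarith : (0:ℝ) ≤ N^2 - 1)]
  have hneg : (-N)^3 + p*(-N)^2 + q*(-N) + t ≤ 0 := by
    nlinarith [mul_le_mul_of_nonneg_right hp2 hNsq,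
      mul_nonneg haq (by nlinarith : (0:ℝ) ≤ N^2 - N),
      mul_nonneg hat (by nlinarith : (0:ℝ) ≤ N^2 - 1)]
  have hle : (-N) ≤ N := by linarith
  have hIVT := intermediate_value_Icc hle hc.continuousOn
  have h0 : (0:ℝ) ∈ Set.Icc ((fun x : ℝ => x^3 + p*x^2 + q*x + t) (-N))
      ((fun x : ℝ => x^3 + p*x^2 + q*x + t) N) := ⟨hneg, hpos⟩
  obtain ⟨x, _, hx⟩ := hIVT h0
  exact ⟨x, hx⟩

lemma Mbound (a b A B : ℝ) (ha1 : -A ≤ a) (ha2 : a ≤ A) (hb1 : -B ≤ b) (hb2 : b ≤ B) :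
    0 ≤ (A+B+7)^4 - 6*(A+B+7)^2 + 1 + (1-(A+B+7)^2)*(a+b*(A+B+7)) := by
  have hA : 0 ≤ A := by linarith
  have hB : 0 ≤ B := by linarith
  set M : ℝ := A+B+7 with hM
  have hM7 : 7 ≤ M := by simp only [hM]; linarith
  have h1 : a + b*M ≤ A + B*M := by nlinarith
  have hM2 : (0:ℝ) ≤ M^2 - 1 := by nlinarith
  have h3 : (1-M^2)*(A+B*M) ≤ (1-M^2)*(a+b*M) := by
    nlinarith [mul_nonneg hM2 (sub_nonneg.mpr h1)]
  have h4 : 0 ≤ M^4 - 6*M^2 + 1 + (1-M^2)*(A+B*M) := by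
    have hAM : A ≤ M - 7 := by simp only [hM]; linarith
    have hBM : B ≤ M - 7 := by simp only [hM]; linarith
    have h5 : A + B*M ≤ (M-7) + (M-7)*M := by nlinarith
    have h6 : (1-M^2)*((M-7) + (M-7)*M) ≤ (1-M^2)*(A+B*M) := by
      nlinarith [mul_nonneg hM2 (sub_nonneg.mpr h5)]
    nlinarith [mul_pos (by linarith : (0:ℝ) < M) (mul_pos (by linarith : (0:ℝ) < M) (by linarith : (0:ℝ) < M))]
  linarith



/-- Types `E₄` and `E₅`: when `Δ(a,b) > 0`, the quartic
`R_{a,b}(p) = p⁴ − 6p² + 1 + (1 − p²)(a + bp)` has four pairwise distinct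
real roots. -/
theorem R_four_distinct_roots_of_disc_pos (a b : ℝ) (R : ℝ → ℝ) (Δ : ℝ → ℝ → ℝ)
    (hR : R = fun p => p^4 - 6*p^2 + 1 + (1 - p^2)*(a + b*p))
    (hΔ : Δ = fun a b => 16*a^5 + 4*(b^2 + 68)*a^4 + 16*(b^2 + 144)*a^3
      - 8*(b^2 - 80)*(16 + b^2)*a^2 + 96*(16 + b^2)^2*a + 4*(16 + b^2)^3)
    (hpos : Δ a b > 0) :
    ∃ p₁ p₂ p₃ p₄ : ℝ,
      p₁ ≠ p₂ ∧ p₁ ≠ p₃ ∧ p₁ ≠ p₄ ∧ p₂ ≠ p₃ ∧ p₂ ≠ p₄ ∧ p₃ ≠ p₄ ∧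
      R p₁ = 0 ∧ R p₂ = 0 ∧ R p₃ = 0 ∧ R p₄ = 0 := by
  have hpos' : 16*a^5 + 4*(b^2 + 68)*a^4 + 16*(b^2 + 144)*a^3
      - 8*(b^2 - 80)*(16 + b^2)*a^2 + 96*(16 + b^2)^2*a + 4*(16 + b^2)^3 > 0 := by
    rw [hΔ] at hpos; exact hpos
  -- Step 1: a real root r of R, by IVT on [1, |a|+|b|+7]
  have hcont : Continuous fun p : ℝ => p^4 - 6*p^2 + 1 + (1 - p^2)*(a + b*p) := by
    continuity
  obtain ⟨M, hM⟩ : ∃ M : ℝ, M = |a| + |b| + 7 := ⟨_, rfl⟩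
  have h1M : (1:ℝ) ≤ M := by
    have := abs_nonneg a; have := abs_nonneg b; simp only [hM]; linarith
  have hIVT := intermediate_value_Icc h1M hcont.continuousOn
  have h0mem : (0:ℝ) ∈ Set.Icc
      ((fun p : ℝ => p^4 - 6*p^2 + 1 + (1 - p^2)*(a + b*p)) 1)
      ((fun p : ℝ => p^4 - 6*p^2 + 1 + (1 - p^2)*(a + b*p)) M) := by
    constructor
    · show (1:ℝ)^4 - 6*1^2 + 1 + (1 - 1^2)*(a + b*1) ≤ 0
      norm_num
    · show (0:ℝ) ≤ M^4 - 6*M^2 + 1 + (1 - M^2)*(a + b*M)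
      rw [hM]
      exact Mbound a b |a| |b| (neg_abs_le a) (le_abs_self a) (neg_abs_le b) (le_abs_self b)
  obtain ⟨r, _, hr⟩ := hIVT h0mem
  have hr' : r^4 - 6*r^2 + 1 + (1 - r^2)*(a + b*r) = 0 := hr
  -- Step 2: a real root s of the cubic cofactor
  obtain ⟨s, hs⟩ := cubic_has_root (r - b) (r^2 - b*r - 6 - a) (r^3 - b*r^2 - (6+a)*r + b)
  -- Step 3: complete the factorization over ℝ
  obtain ⟨u, hu⟩ : ∃ u : ℝ, u = (b - r - s)/2 := ⟨_, rfl⟩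
  obtain ⟨v, hv⟩ : ∃ v : ℝ, v = s^2 + (r-b)*s + r^2 - b*r - 6 - a - u^2 := ⟨_, rfl⟩
  have hfact0 : ∀ x : ℝ, x^4 - 6*x^2 + 1 + (1 - x^2)*(a + b*x) = (x-r)*(x-s)*((x-u)^2+v) := by
    intro x
    linear_combination hr' + (x - r)*hs + (2*x*(x-r)*(x-s))*hu - ((x-r)*(x-s))*hv
  have hfact : ∀ x : ℝ, R x = (x-r)*(x-s)*((x-u)^2+v) := by
    intro x; rw [hR]; exact hfact0 x
  -- Step 4: the discriminant identity
  have hB : -b = -(r+s+2*u) := by linear_combination 2*hu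
  have hC : -(6+a) = r*s+2*u*(r+s)+u^2+v := by
    linear_combination -hv - (2*(r+s))*hu
  have hE : 1+a = r*s*(u^2+v) := by linear_combination hfact0 0
  have hD : b = -(2*u*r*s+(r+s)*(u^2+v)) := by
    linear_combination (hfact0 1)/2 - (hfact0 (-1))/2 - 2*hu
  have key : 16*a^5 + 4*(b^2 + 68)*a^4 + 16*(b^2 + 144)*a^3
      - 8*(b^2 - 80)*(16 + b^2)*a^2 + 96*(16 + b^2)^2*a + 4*(16 + b^2)^3
      = -4*v*(r-s)^2*((r-u)^2+v)^2*((s-u)^2+v)^2 := by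
    have h := discid (-b) (-(6+a)) b (1+a) r s u v hB hC hD hE
    linear_combination h
  have hprod : -4*v*(r-s)^2*((r-u)^2+v)^2*((s-u)^2+v)^2 > 0 := by
    rw [← key]; exact hpos'
  -- Step 5: v < 0, so the quadratic factor has two real roots
  have hvneg : v < 0 := by
    by_contra h
    push_neg at h
    have hS : 0 ≤ (r-s)^2*((r-u)^2+v)^2*((s-u)^2+v)^2 := by positivity
    have hprod' : 0 < (-4*v) * ((r-s)^2*((r-u)^2+v)^2*((s-u)^2+v)^2) := by
      linarith [hprod]
    have hc : -4*v ≤ 0 := by linarith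
    have := mul_nonpos_of_nonpos_of_nonneg hc hS
    linarith
  obtain ⟨w, hwdef⟩ : ∃ w : ℝ, w = Real.sqrt (-v) := ⟨_, rfl⟩
  have hw2 : w^2 = -v := by rw [hwdef]; exact Real.sq_sqrt (by linarith)
  have hw0 : 0 < w := by rw [hwdef]; exact Real.sqrt_pos.mpr (by linarith)
  have hw' : w^2 + v = 0 := by linarith
  have hv2 : v = -w^2 := by linarith
  refine ⟨r, s, u+w, u-w, ?_, ?_, ?_, ?_, ?_, ?_, ?_, ?_, ?_, ?_⟩
  · intro h; rw [h] at hprod; linarith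
  · intro h; rw [h, hv2] at hprod; linarith
  · intro h; rw [h, hv2] at hprod; linarith
  · intro h; rw [h, hv2] at hprod; linarith
  · intro h; rw [h, hv2] at hprod; linarith
  · intro h
    have h0 : w = 0 := by linarith
    linarith
  · rw [hfact]; ring
  · rw [hfact]; ring
  · rw [hfact]; linear_combination ((u+w-r)*(u+w-s))*hw'
  · rw [hfact]; linear_combination ((u-w-r)*(u-w-s))*hw'
end

section
/- Let a, b, p be real numbers with p² ≠ 1 and R_{a,b}(p) = p⁴ − 6p² + 1 + (1 − p²)(a + bp) = 0. Then a(1 − 3p²) + p(4p³ + b(1 − 3p²) − 12p) = (p² + 1)³/(p² − 1). -/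
/-- Equation (28) of the paper: at a root `p` of
`R_{a,b}(p) = p⁴ − 6p² + 1 + (1 − p²)(a + bp)` with `p² ≠ 1`, the eigenvalue
`λ₁ = a(1−3p²) + p(4p³ + b(1−3p²) − 12p)` equals `(p²+1)³/(p²−1)`. -/
theorem lambda_one_at_roots (a b p : ℝ) (hp : p^2 ≠ 1)
    (hroot : p^4 - 6*p^2 + 1 + (1 - p^2)*(a + b*p) = 0) :
    a*(1 - 3*p^2) + p*(4*p^3 + b*(1 - 3*p^2) - 12*p) = (p^2 + 1)^3 / (p^2 - 1) := by
  have h : p^2 - 1 ≠ 0 := sub_ne_zero.mpr hp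
  field_simp
  nlinarith [hroot, sq_nonneg p, mul_self_nonneg (p^2-1)]
end

section
/- At the points (a,b) = (−27/2, ±(5√5)/2), the function Δ satisfies Δ = 0, ∂Δ/∂a = 0 and ∂Δ/∂b = 0; moreover at (−27/2, (5√5)/2) the second-order partial derivatives are ∂²Δ/∂a² = −109350, ∂²Δ/∂a∂b = −109350√5 and ∂²Δ/∂b² = −546750, so the Hessian of Δ there is negative semidefinite of rank 1 (these are the cuspidal points of the curve Δ = 0). -/
/-!
`Δ` depends on `b` only through `b ^ 2`, and at `a = -27/2`, `b ^ 2 = 125/4` the polynomial and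
both first partials vanish, so both points are singular points of `Δ = 0`. At `(-27/2, 5√5/2)`
the Hessian factors as `-109350 • v vᵀ` with `v = (1, √5)`, hence is negative semidefinite of
rank one: the singularity is a cusp rather than a node.
-/

namespace Matrix

theorem rank_vecMulVec_eq_one {m n K : Type*} [Fintype m] [Fintype n] [Field K]
    {w : m → K} {v : n → K} (hw : w ≠ 0) (hv : v ≠ 0) : (vecMulVec w v).rank = 1 := by
  refine le_antisymm (rank_vecMulVec_le w v) ?_
  obtain ⟨j, hj⟩ := Function.ne_iff.mp hv
  have hcol : (vecMulVec w v).col j ≠ 0 := fun h =>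
    hw (funext fun i => (mul_eq_zero.mp (congrFun h i)).resolve_right hj)
  rw [rank_eq_finrank_span_cols, Nat.one_le_iff_ne_zero, Ne, Submodule.finrank_eq_zero,
    Submodule.span_eq_bot]
  exact fun h => hcol (h _ ⟨j, rfl⟩)

end Matrix

def disc (a b : ℝ) : ℝ :=
  16*a^5 + 4*(b^2 + 68)*a^4 + 16*(b^2 + 144)*a^3
    - 8*(b^2 - 80)*(16 + b^2)*a^2 + 96*(16 + b^2)^2*a + 4*(16 + b^2)^3

def discDerivA (a b : ℝ) : ℝ :=
  80*a^4 + 16*(b^2 + 68)*a^3 + 48*(b^2 + 144)*a^2 - 16*(b^2 - 80)*(16 + b^2)*a + 96*(16 + b^2)^2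

def discDerivB (a b : ℝ) : ℝ :=
  8*b*(a^4 + 4*a^3 - 4*(b^2 - 32)*a^2 + 48*(16 + b^2)*a + 3*(16 + b^2)^2)

def discDerivAA (a b : ℝ) : ℝ :=
  320*a^3 + 48*(b^2 + 68)*a^2 + 96*(b^2 + 144)*a - 16*(b^2 - 80)*(16 + b^2)

def discDerivAB (a b : ℝ) : ℝ :=
  8*b*(4*a^3 + 12*a^2 - 8*(b^2 - 32)*a + 48*(16 + b^2))

def discDerivBB (a b : ℝ) : ℝ :=
  8*(a^4 + 4*a^3 - 4*(b^2 - 32)*a^2 + 48*(16 + b^2)*a + 3*(16 + b^2)^2)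
    + 8*b^2*(-8*a^2 + 96*a + 12*(16 + b^2))

theorem deriv_disc_fst (b : ℝ) : deriv (disc · b) = (discDerivA · b) := by
  funext a
  simp (disch := fun_prop) only [disc, discDerivA, deriv_fun_add, deriv_fun_sub,
    deriv_fun_mul, deriv_fun_pow, deriv_const', deriv_id'', deriv_const_mul_id']
  ring

theorem deriv_disc_snd (a : ℝ) : deriv (disc a ·) = (discDerivB a ·) := by
  funext b
  simp (disch := fun_prop) only [disc, discDerivB, deriv_fun_add, deriv_fun_sub,
    deriv_fun_mul, deriv_fun_pow, deriv_const', deriv_id'']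
  ring

theorem deriv_discDerivA_fst (b : ℝ) : deriv (discDerivA · b) = (discDerivAA · b) := by
  funext a
  simp (disch := fun_prop) only [discDerivA, discDerivAA, deriv_fun_add, deriv_fun_sub,
    deriv_fun_mul, deriv_fun_pow, deriv_const', deriv_id'', deriv_const_mul_id']
  ring

theorem deriv_discDerivB_fst (b : ℝ) : deriv (discDerivB · b) = (discDerivAB · b) := by
  funext a
  simp (disch := fun_prop) only [discDerivB, discDerivAB, deriv_fun_add, deriv_fun_sub,
    deriv_fun_mul, deriv_fun_pow, deriv_const', deriv_id'', deriv_const_mul_id']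
  ring

theorem deriv_discDerivB_snd (a : ℝ) : deriv (discDerivB a ·) = (discDerivBB a ·) := by
  funext b
  simp (disch := fun_prop) only [discDerivB, discDerivBB, deriv_fun_add, deriv_fun_sub,
    deriv_fun_mul, deriv_fun_pow, deriv_const', deriv_id'', deriv_const_mul_id']
  ring

theorem disc_singular_of_sq_eq {b : ℝ} (hb : b ^ 2 = 125 / 4) :
    disc (-27/2) b = 0 ∧ discDerivA (-27/2) b = 0 ∧ discDerivB (-27/2) b = 0 := by
  simp only [disc, discDerivA, discDerivB, hb]
  norm_num

theorem disc_hessian_of_sq_eq {b : ℝ} (hb : b ^ 2 = 125 / 4) :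
    discDerivAA (-27/2) b = -109350 ∧ discDerivAB (-27/2) b = -43740 * b ∧
      discDerivBB (-27/2) b = -546750 := by
  simp only [discDerivAA, discDerivAB, discDerivBB, hb]
  norm_num
  ring

theorem disc_hessian_matrix_eq :
    !![(-109350 : ℝ), -109350*√5; -109350*√5, -546750]
      = (-109350 : ℝ) • Matrix.vecMulVec ![1, √5] ![1, √5] := by
  have h5 : √5 * √5 = 5 := Real.mul_self_sqrt (by norm_num)
  ext i j
  fin_cases i <;> fin_cases j <;> norm_num [h5]

/-- Proposition 8: `(a,b) = (−27/2, ±5√5/2)` are critical points of the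
discriminant `Δ` lying on `Δ = 0`; at `(−27/2, 5√5/2)` the second-order
partial derivatives are `Δ_aa = −109350`, `Δ_ab = −109350√5`,
`Δ_bb = −546750`, so the Hessian there is negative semidefinite of rank 1
(the cuspidal points of the curve `Δ = 0`). -/
theorem disc_cuspidal_points (Δ : ℝ → ℝ → ℝ)
    (hΔ : Δ = fun a b => 16*a^5 + 4*(b^2 + 68)*a^4 + 16*(b^2 + 144)*a^3
      - 8*(b^2 - 80)*(16 + b^2)*a^2 + 96*(16 + b^2)^2*a + 4*(16 + b^2)^3) :
    Δ (-27/2) (5*Real.sqrt 5/2) = 0 ∧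
    Δ (-27/2) (-(5*Real.sqrt 5)/2) = 0 ∧
    deriv (fun a => Δ a (5*Real.sqrt 5/2)) (-27/2) = 0 ∧
    deriv (fun b => Δ (-27/2) b) (5*Real.sqrt 5/2) = 0 ∧
    deriv (fun a => Δ a (-(5*Real.sqrt 5)/2)) (-27/2) = 0 ∧
    deriv (fun b => Δ (-27/2) b) (-(5*Real.sqrt 5)/2) = 0 ∧
    deriv (deriv (fun a => Δ a (5*Real.sqrt 5/2))) (-27/2) = -109350 ∧
    deriv (fun a => deriv (fun b => Δ a b) (5*Real.sqrt 5/2)) (-27/2)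
      = -109350*Real.sqrt 5 ∧
    deriv (deriv (fun b => Δ (-27/2) b)) (5*Real.sqrt 5/2) = -546750 ∧
    (-(!![(-109350 : ℝ), -109350*Real.sqrt 5;
        -109350*Real.sqrt 5, -546750])).PosSemidef ∧
    (!![(-109350 : ℝ), -109350*Real.sqrt 5;
        -109350*Real.sqrt 5, -546750]).rank = 1 := by
  obtain rfl : Δ = disc := hΔ
  have h5 : √5 ^ 2 = 5 := Real.sq_sqrt (by norm_num)
  have hb : (5 * √5 / 2) ^ 2 = (125 / 4 : ℝ) := by linear_combination (25 / 4) * h5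
  have hb' : (-(5 * √5) / 2) ^ 2 = (125 / 4 : ℝ) := by linear_combination (25 / 4) * h5
  obtain ⟨hΔ, hΔa, hΔb⟩ := disc_singular_of_sq_eq hb
  obtain ⟨hΔ', hΔa', hΔb'⟩ := disc_singular_of_sq_eq hb'
  obtain ⟨hΔaa, hΔab, hΔbb⟩ := disc_hessian_of_sq_eq hb
  simp only [deriv_disc_fst, deriv_disc_snd, deriv_discDerivA_fst, deriv_discDerivB_fst,
    deriv_discDerivB_snd, disc_hessian_matrix_eq]
  refine ⟨hΔ, hΔ', hΔa, hΔb, hΔa', hΔb', hΔaa, by rw [hΔab]; ring, hΔbb, ?_, ?_⟩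
  · rw [← neg_smul]
    simpa using
      (Matrix.posSemidef_vecMulVec_self_star ![1, √5]).smul (by norm_num : (0 : ℝ) ≤ 109350)
  · rw [Matrix.rank_smul_of_mem_nonZeroDivisors _ (mem_nonZeroDivisors_of_ne_zero (by norm_num))]
    have hv : ![1, √5] ≠ 0 := fun h => one_ne_zero (congrFun h 0)
    exact Matrix.rank_vecMulVec_eq_one hv hv
end

section
/- For every real a > −1 and every real b, Δ(a,b) > 0. In particular the curve Δ(a,b) = 0 is contained in the half-plane a ≤ −1. -/
/-- Proposition 8: `Δ(a,b) > 0` for all `a > −1`; in particular the curve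
`Δ(a,b) = 0` is contained in the half-plane `a ≤ −1`. -/
theorem disc_pos_of_a_gt_neg_one (Δ : ℝ → ℝ → ℝ)
    (hΔ : Δ = fun a b => 16*a^5 + 4*(b^2 + 68)*a^4 + 16*(b^2 + 144)*a^3
      - 8*(b^2 - 80)*(16 + b^2)*a^2 + 96*(16 + b^2)^2*a + 4*(16 + b^2)^3) :
    (∀ a b : ℝ, a > -1 → Δ a b > 0) ∧ (∀ a b : ℝ, Δ a b = 0 → a ≤ -1) := by
  subst hΔ
  have key : ∀ a b : ℝ, a > -1 → (fun a b : ℝ => 16*a^5 + 4*(b^2 + 68)*a^4 + 16*(b^2 + 144)*a^3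
      - 8*(b^2 - 80)*(16 + b^2)*a^2 + 96*(16 + b^2)^2*a + 4*(16 + b^2)^3) a b > 0 := by
    intro a b ha
    simp only
    obtain ⟨t, ht0, rfl⟩ : ∃ t : ℝ, 0 < t ∧ a = t - 1 := ⟨a + 1, by linarith, by ring⟩
    set s : ℝ := b ^ 2 with hsdef
    have hs : (0:ℝ) ≤ s := sq_nonneg b
    have hdec : 16*(t-1)^5 + 4*(s + 68)*(t-1)^4 + 16*(s + 144)*(t-1)^3
        - 8*(s - 80)*(16 + s)*(t-1)^2 + 96*(16 + s)^2*(t-1) + 4*(16 + s)^3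
        = 4*s*(t^2 - s)^2 + 88*s^2 + 500*s + 16*t^5 + 192*t^4 + 1376*t^3
          + 488*t^2*s + 4800*t^2 + 112*t*s^2 + 2080*t*s + 10000*t := by ring
    rw [hdec]
    have h1 : 0 ≤ 4*s*(t^2 - s)^2 := by positivity
    have h2 : 0 ≤ t^2*s := mul_nonneg (sq_nonneg t) hs
    nlinarith [mul_nonneg ht0.le (sq_nonneg s), mul_nonneg ht0.le hs, sq_nonneg s,
      pow_pos ht0 5, pow_pos ht0 4, pow_pos ht0 3, pow_pos ht0 2, h1, h2]
  refine ⟨key, fun a b h0 => ?_⟩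
  by_contra hc
  push_neg at hc
  exact absurd h0 (ne_of_gt (key a b (by linarith)))
end

section
/- At the point (a,b) = (−1,0) one has Δ(−1,0) = 0, ∂Δ/∂b(−1,0) = 0, ∂Δ/∂a(−1,0) = 10000 and ∂²Δ/∂b²(−1,0) = 1000. Consequently, the level curve Δ = 0 near (−1,0) is the graph of a function a = a(b) with a(0) = −1, a'(0) = 0 and a''(0) = −1/10, i.e. a = −1 − b²/20 + O(b³). -/
/-!
`Δ a b` depends on `b` only through `s = b²`: `Δ a b = discSq a (b²)`. At `(a, s) = (-1, 0)`
the polynomial `discSq` vanishes with `∂ₐ discSq = 10000` and `∂ₛ discSq = 500`, so the implicit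
function theorem solves `discSq a s = 0` as `a = h s` with `h 0 = -1` and
`h' 0 = -500 / 10000 = -1/20`.
The level curve `Δ = 0` is then `a = h (b²)`, whose derivative `2 b h'(b²)` vanishes at `0` and has
derivative `2 h'(0) = -1/10` there; likewise `Δ_bb(-1, 0) = 2 ∂ₛ discSq (-1, 0) = 1000`.
-/

open Filter Topology

section

variable {𝕜 : Type*} [NontriviallyNormedField 𝕜]

theorem ContinuousLinearMap.isInvertible_of_apply_one_ne_zero {f : 𝕜 →L[𝕜] 𝕜} (hf : f 1 ≠ 0) :
    f.IsInvertible :=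
  ⟨ContinuousLinearEquiv.unitsEquivAut 𝕜 (Units.mk0 (f 1) hf), by
    ext; simp [ContinuousLinearEquiv.unitsEquivAut_apply]⟩

variable {F : Type*} [NormedAddCommGroup F] [NormedSpace 𝕜 F]

theorem DifferentiableAt.fderiv_prod_apply {G : 𝕜 × 𝕜 → F} {u : 𝕜 × 𝕜}
    (hG : DifferentiableAt 𝕜 G u) (v : 𝕜 × 𝕜) :
    fderiv 𝕜 G u v =
      v.1 • deriv (fun x => G (x, u.2)) u.1 + v.2 • deriv (fun y => G (u.1, y)) u.2 := by
  have h₁ : HasDerivAt (fun x => G (x, u.2)) (fderiv 𝕜 G u (1, 0)) u.1 :=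
    hG.hasFDerivAt.comp_hasDerivAt u.1 ((hasDerivAt_id' u.1).prodMk (hasDerivAt_const u.1 u.2))
  have h₂ : HasDerivAt (fun y => G (u.1, y)) (fderiv 𝕜 G u (0, 1)) u.2 :=
    hG.hasFDerivAt.comp_hasDerivAt u.2 ((hasDerivAt_const u.2 u.1).prodMk (hasDerivAt_id' u.2))
  have hv : v = v.1 • ((1 : 𝕜), (0 : 𝕜)) + v.2 • ((0 : 𝕜), (1 : 𝕜)) := by ext <;> simp
  rw [h₁.deriv, h₂.deriv, hv, map_add, map_smul, map_smul]
  simp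

theorem hasDerivAt_comp_sq {k : 𝕜 → 𝕜} {b : 𝕜} (hk : DifferentiableAt 𝕜 k (b ^ 2)) :
    HasDerivAt (fun x => k (x ^ 2)) (2 * b * deriv k (b ^ 2)) b := by
  have hsq : HasDerivAt (fun x : 𝕜 => x ^ 2) (2 * b) b := by simpa using hasDerivAt_pow 2 b
  exact (hk.hasDerivAt.comp b hsq).congr_deriv (mul_comm _ _)

theorem deriv_comp_sq_zero {k : 𝕜 → 𝕜} (hk : DifferentiableAt 𝕜 k 0) :
    deriv (fun b => k (b ^ 2)) 0 = 0 := by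
  simpa using (hasDerivAt_comp_sq (b := (0 : 𝕜)) (by simpa using hk)).deriv

theorem deriv_deriv_comp_sq_zero {k : 𝕜 → 𝕜} (hk : ContDiffAt 𝕜 2 k 0) :
    deriv (deriv fun b => k (b ^ 2)) 0 = 2 * deriv k 0 := by
  have hsq : Tendsto (fun b : 𝕜 => b ^ 2) (𝓝 0) (𝓝 0) := by
    simpa using (continuous_pow 2).tendsto (0 : 𝕜)
  have hderiv : deriv (fun b => k (b ^ 2)) =ᶠ[𝓝 0] fun b => 2 * b * deriv k (b ^ 2) := by
    filter_upwards [hsq.eventually ((hk.eventually (by simp)).mono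
      fun y hy => hy.differentiableAt two_ne_zero)] with b hb
    exact (hasDerivAt_comp_sq hb).deriv
  have hk' : DifferentiableAt 𝕜 (deriv k) (0 ^ 2) := by
    simpa using (hk.derivWithin (m := 1) (by norm_num)).differentiableAt one_ne_zero
  rw [hderiv.deriv_eq]
  have h : HasDerivAt (fun b => 2 * b * deriv k (b ^ 2)) _ 0 :=
    ((hasDerivAt_id' (0 : 𝕜)).const_mul 2).mul (hasDerivAt_comp_sq hk')
  simpa using h.deriv

end

section

variable {𝕜 : Type*} [RCLike 𝕜]

theorem exists_implicitFunction_fst {P : 𝕜 → 𝕜 → 𝕜} {a₀ s₀ : 𝕜} {n : WithTop ℕ∞}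
    (hP : ContDiffAt 𝕜 n (Function.uncurry P) (a₀, s₀)) (hn : n ≠ 0)
    (hPa : deriv (fun a => P a s₀) a₀ ≠ 0) :
    ∃ h : 𝕜 → 𝕜, (∀ᶠ v in 𝓝 (a₀, s₀), P v.1 v.2 = P a₀ s₀ ↔ v.1 = h v.2) ∧ h s₀ = a₀ ∧
      ContDiffAt 𝕜 n h s₀ ∧
      deriv h s₀ = -deriv (fun s => P a₀ s) s₀ / deriv (fun a => P a s₀) a₀ := by
  -- Mathlib's implicit function solves for the second coordinate, so swap the variables.
  set G : 𝕜 × 𝕜 → 𝕜 := fun v => P v.2 v.1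
  have hG : ContDiffAt 𝕜 n G (s₀, a₀) := hP.comp (s₀, a₀) (contDiffAt_snd.prodMk contDiffAt_fst)
  have hGd := hG.differentiableAt hn
  have hinv : (fderiv 𝕜 G (s₀, a₀) ∘L .inr 𝕜 𝕜 𝕜).IsInvertible :=
    ContinuousLinearMap.isInvertible_of_apply_one_ne_zero <| by
      simpa [hGd.fderiv_prod_apply] using hPa
  refine ⟨hG.implicitFunction hn hinv, ?_, hG.implicitFunction_apply_self hn hinv,
    hG.contDiffAt_implicitFunction hn hinv, ?_⟩
  · filter_upwards [(continuous_swap.tendsto (a₀, s₀)).eventually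
      (hG.eventually_apply_eq_iff_implicitFunction hn hinv)] with v hv
    exact hv.trans eq_comm
  · rw [(hG.hasStrictFDerivAt_implicitFunction hn hinv).hasFDerivAt.hasDerivAt.deriv]
    simp only [neg_apply, ContinuousLinearMap.comp_apply, ContinuousLinearMap.inl_apply,
      ContinuousLinearMap.inr_apply, hGd.fderiv_prod_apply, smul_eq_mul, one_mul, zero_mul,
      add_zero, zero_add, neg_div, neg_inj, hinv.inverse_apply_eq]
    exact (div_mul_cancel₀ _ hPa).symm

end

def discSq (a s : ℝ) : ℝ :=
  16*a^5 + 4*(s + 68)*a^4 + 16*(s + 144)*a^3 - 8*(s - 80)*(16 + s)*a^2 + 96*(16 + s)^2*a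
    + 4*(16 + s)^3

theorem contDiff_uncurry_discSq {n : WithTop ℕ∞} : ContDiff ℝ n (Function.uncurry discSq) := by
  unfold Function.uncurry discSq
  fun_prop

theorem deriv_discSq_fst : deriv (fun a => discSq a 0) (-1) = 10000 := by
  unfold discSq
  simp (disch := fun_prop)
  norm_num

theorem deriv_discSq_snd : deriv (fun s => discSq (-1) s) 0 = 500 := by
  unfold discSq
  simp (disch := fun_prop)
  norm_num

theorem exists_implicitFunction_discSq :
    ∃ h : ℝ → ℝ, (∀ᶠ v in 𝓝 ((-1, 0) : ℝ × ℝ), discSq v.1 v.2 = 0 ↔ v.1 = h v.2) ∧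
      h 0 = -1 ∧ ContDiffAt ℝ 2 h 0 ∧ deriv h 0 = -1 / 20 := by
  obtain ⟨h, hiff, h0, hC, hd⟩ := exists_implicitFunction_fst (P := discSq) (a₀ := -1) (s₀ := 0)
    contDiff_uncurry_discSq.contDiffAt two_ne_zero (by rw [deriv_discSq_fst]; norm_num)
  have hzero : discSq (-1) 0 = 0 := by norm_num [discSq]
  refine ⟨h, by simpa only [hzero] using hiff, h0, hC, ?_⟩
  rw [hd, deriv_discSq_fst, deriv_discSq_snd]
  norm_num

/-- At `(a,b) = (−1,0)` one has `Δ = 0`, `Δ_b = 0`, `Δ_a = 10000`,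
`Δ_bb = 1000`; consequently near `(−1,0)` the level curve `Δ = 0` is the
graph of a function `a = a(b)` with `a(0) = −1`, `a'(0) = 0`,
`a''(0) = −1/10`, i.e. `a = −1 − b²/20 + O(b³)`. -/
theorem disc_curve_near_minus_one (Δ : ℝ → ℝ → ℝ)
    (hΔ : Δ = fun a b => 16*a^5 + 4*(b^2 + 68)*a^4 + 16*(b^2 + 144)*a^3
      - 8*(b^2 - 80)*(16 + b^2)*a^2 + 96*(16 + b^2)^2*a + 4*(16 + b^2)^3) :
    Δ (-1) 0 = 0 ∧
    deriv (fun b => Δ (-1) b) 0 = 0 ∧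
    deriv (fun a => Δ a 0) (-1) = 10000 ∧
    deriv (deriv (fun b => Δ (-1) b)) 0 = 1000 ∧
    ∃ f : ℝ → ℝ, ∃ U ∈ nhds ((-1, 0) : ℝ × ℝ),
      (∀ x ∈ U, (Δ (Prod.fst x) (Prod.snd x) = 0 ↔ Prod.fst x = f (Prod.snd x))) ∧
      f 0 = -1 ∧ deriv f 0 = 0 ∧ deriv (deriv f) 0 = -1/10 := by
  have hΔsq : Δ = fun a b => discSq a (b ^ 2) := hΔ
  have hslice : ContDiffAt ℝ 2 (fun s => discSq (-1) s) 0 := by unfold discSq; fun_prop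
  obtain ⟨h, hiff, h0, hC, hd⟩ := exists_implicitFunction_discSq
  have hcurve : Tendsto (fun x : ℝ × ℝ => (x.1, x.2 ^ 2)) (𝓝 (-1, 0)) (𝓝 (-1, 0)) := by
    simpa using (continuous_fst.prodMk (continuous_snd.pow 2)).tendsto ((-1, 0) : ℝ × ℝ)
  subst hΔsq
  refine ⟨?_, ?_, ?_, ?_, fun b => h (b ^ 2), _, hcurve.eventually hiff, fun _ hx => hx, ?_, ?_, ?_⟩
  · norm_num [discSq]
  · exact deriv_comp_sq_zero (hslice.differentiableAt two_ne_zero)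
  · simpa using deriv_discSq_fst
  · rw [deriv_deriv_comp_sq_zero hslice, deriv_discSq_snd]; norm_num
  · simpa using h0
  · exact deriv_comp_sq_zero (hC.differentiableAt two_ne_zero)
  · rw [deriv_deriv_comp_sq_zero hC, hd]; norm_num
end

section
/- For every real b, the identity p⁴ − 6p² + 1 + (1 − p²)(−1 + bp) = p(p³ − bp² − 5p + b) holds for all real p; the cubic q(p) = p³ − bp² − 5p + b has discriminant 4b⁴ + 88b² + 500 > 0 and therefore has three pairwise distinct real roots, q(1) = −4 and q(−1) = 4 so no root equals ±1, and if b ≠ 0 no root equals 0. Hence for b ≠ 0, P(p) = p·R_{−1,b}(p) = p²·q(p) has p = 0 as a double root and three further simple real roots, none in {−1, 0, 1}. -/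
lemma E34_cubic_roots (b : ℝ) : ∃ p₁ p₂ p₃ : ℝ, p₁ < -1 ∧ -1 < p₂ ∧ p₂ < 1 ∧ 1 < p₃ ∧
    p₁ + p₂ + p₃ = b ∧ p₁*p₂ + p₁*p₃ + p₂*p₃ = -5 ∧
    ∀ p : ℝ, p^3 - b*p^2 - 5*p + b = (p - p₁)*(p - p₂)*(p - p₃) := by
  set f : ℝ → ℝ := fun p => p^3 - b*p^2 - 5*p + b with hf
  have hcont : Continuous f := by fun_prop
  set M : ℝ := |b| + 6 with hM
  have hb1 : b ≤ |b| := le_abs_self b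
  have hb2 : -|b| ≤ b := neg_abs_le b
  have hb0 : (0:ℝ) ≤ |b| := abs_nonneg b
  have hM6 : (6:ℝ) ≤ M := by rw [hM]; linarith
  have hfM : 0 < f M := by
    simp only [hf]
    nlinarith [sq_nonneg M, sq_nonneg (M - 1)]
  have hfmM : f (-M) < 0 := by
    simp only [hf]
    nlinarith [sq_nonneg M, sq_nonneg (M - 1)]
  have hf1 : f 1 = -4 := by simp only [hf]; ring
  have hfm1 : f (-1) = 4 := by simp only [hf]; ring
  have m1 : (0:ℝ) ∈ Set.Icc (f (-M)) (f (-1)) := by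
    rw [hfm1]; exact ⟨le_of_lt hfmM, by norm_num⟩
  have m2 : (0:ℝ) ∈ Set.Icc (f 1) (f (-1)) := by
    rw [hf1, hfm1]; constructor <;> norm_num
  have m3 : (0:ℝ) ∈ Set.Icc (f 1) (f M) := by
    rw [hf1]; exact ⟨by norm_num, le_of_lt hfM⟩
  obtain ⟨p₁, hp₁mem, hp₁⟩ := intermediate_value_Icc (by linarith : -M ≤ (-1:ℝ))
    hcont.continuousOn m1
  obtain ⟨p₂, hp₂mem, hp₂⟩ := intermediate_value_Icc' (by norm_num : (-1:ℝ) ≤ 1)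
    hcont.continuousOn m2
  obtain ⟨p₃, hp₃mem, hp₃⟩ := intermediate_value_Icc (by linarith : (1:ℝ) ≤ M)
    hcont.continuousOn m3
  have h1ne : p₁ ≠ -1 := by rintro rfl; rw [hfm1] at hp₁; norm_num at hp₁
  have h2ne : p₂ ≠ -1 := by rintro rfl; rw [hfm1] at hp₂; norm_num at hp₂
  have h2ne' : p₂ ≠ 1 := by rintro rfl; rw [hf1] at hp₂; norm_num at hp₂
  have h3ne : p₃ ≠ 1 := by rintro rfl; rw [hf1] at hp₃; norm_num at hp₃
  have hlt1 : p₁ < -1 := lt_of_le_of_ne hp₁mem.2 h1ne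
  have hlt2 : -1 < p₂ := lt_of_le_of_ne hp₂mem.1 (Ne.symm h2ne)
  have hlt2' : p₂ < 1 := lt_of_le_of_ne hp₂mem.2 h2ne'
  have hlt3 : 1 < p₃ := lt_of_le_of_ne hp₃mem.1 (Ne.symm h3ne)
  have h12 : p₁ ≠ p₂ := by intro h; rw [h] at hlt1; linarith
  have h13 : p₁ ≠ p₃ := by intro h; rw [h] at hlt1; linarith
  have h23 : p₂ ≠ p₃ := by intro h; rw [h] at hlt2'; linarith
  simp only [hf] at hp₁ hp₂ hp₃
  have e12 : p₁^2 + p₁*p₂ + p₂^2 - b*(p₁+p₂) - 5 = 0 := by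
    have h := sub_ne_zero.mpr h12
    have hz : (p₁ - p₂) * (p₁^2 + p₁*p₂ + p₂^2 - b*(p₁+p₂) - 5) = 0 := by
      linear_combination hp₁ - hp₂
    exact (mul_eq_zero.mp hz).resolve_left h
  have e13 : p₁^2 + p₁*p₃ + p₃^2 - b*(p₁+p₃) - 5 = 0 := by
    have h := sub_ne_zero.mpr h13
    have hz : (p₁ - p₃) * (p₁^2 + p₁*p₃ + p₃^2 - b*(p₁+p₃) - 5) = 0 := by
      linear_combination hp₁ - hp₃
    exact (mul_eq_zero.mp hz).resolve_left h
  have hs1 : p₁ + p₂ + p₃ = b := by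
    have h := sub_ne_zero.mpr h23
    have hz : (p₂ - p₃) * (p₁ + p₂ + p₃ - b) = 0 := by
      linear_combination e12 - e13
    have := (mul_eq_zero.mp hz).resolve_left h
    linarith
  have hs2 : p₁*p₂ + p₁*p₃ + p₂*p₃ = -5 := by
    linear_combination (p₁ + p₂) * hs1 - e12
  have hs3 : p₁*p₂*p₃ = -b := by
    linear_combination hp₁ + p₁*hs2 - p₁^2*hs1
  refine ⟨p₁, p₂, p₃, hlt1, hlt2, hlt2', hlt3, hs1, hs2, fun p => ?_⟩
  linear_combination p^2*hs1 - p*hs2 + hs3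

lemma E34_hasDerivAt (b x : ℝ) :
    HasDerivAt (fun p : ℝ => p^5 - b*p^4 - 5*p^3 + b*p^2)
      (5*x^4 - 4*b*x^3 - 15*x^2 + 2*b*x) x := by
  have h : HasDerivAt (fun p : ℝ => p^5 - b*p^4 - 5*p^3 + b*p^2)
      ((5:ℕ)*x^4 - b*((4:ℕ)*x^3) - 5*((3:ℕ)*x^2) + b*((2:ℕ)*x^1)) x :=
    (((hasDerivAt_pow 5 x).sub ((hasDerivAt_pow 4 x).const_mul b)).sub
      ((hasDerivAt_pow 3 x).const_mul 5)).add ((hasDerivAt_pow 2 x).const_mul b)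
  convert h using 1
  push_cast
  ring

lemma E34_hasDerivAt2 (b x : ℝ) :
    HasDerivAt (fun p : ℝ => 5*p^4 - 4*b*p^3 - 15*p^2 + 2*b*p)
      (20*x^3 - 12*b*x^2 - 30*x + 2*b) x := by
  have h : HasDerivAt (fun p : ℝ => 5*p^4 - 4*b*p^3 - 15*p^2 + 2*b*p)
      (5*((4:ℕ)*x^3) - (4*b)*((3:ℕ)*x^2) - 15*((2:ℕ)*x^1) + (2*b)*1) x := by
    have h4 := (hasDerivAt_pow 4 x).const_mul (5:ℝ)
    have h3 := (hasDerivAt_pow 3 x).const_mul (4*b)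
    have h2 := (hasDerivAt_pow 2 x).const_mul (15:ℝ)
    have h1 := (hasDerivAt_id x).const_mul (2*b)
    exact ((h4.sub h3).sub h2).add h1
  convert h using 1
  push_cast
  ring




/-- Proposition 10 (type `E¹₃₄`, normal form `a = −1`): the factorization
`p⁴ − 6p² + 1 + (1 − p²)(−1 + bp) = p(p³ − bp² − 5p + b)` holds;
the cubic `q(p) = p³ − bp² − 5p + b` has discriminant
`4b⁴ + 88b² + 500 > 0` hence three pairwise distinct real roots,
`q(1) = −4`, `q(−1) = 4` so no root is `±1`, and if `b ≠ 0` no root is `0`.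
Hence for `b ≠ 0`, `P(p) = p·R_{−1,b}(p) = p²·q(p)` has `p = 0` as a double
root and three further simple real roots, none in `{−1,0,1}`. -/
theorem E34_singularities (b : ℝ) (q P : ℝ → ℝ)
    (hq : q = fun p => p^3 - b*p^2 - 5*p + b)
    (hP : P = fun p => p * (p^4 - 6*p^2 + 1 + (1 - p^2)*(-1 + b*p))) :
    (∀ p : ℝ, p^4 - 6*p^2 + 1 + (1 - p^2)*(-1 + b*p) = p * (p^3 - b*p^2 - 5*p + b)) ∧
    4*b^4 + 88*b^2 + 500 > 0 ∧
    (∃ p₁ p₂ p₃ : ℝ, p₁ ≠ p₂ ∧ p₁ ≠ p₃ ∧ p₂ ≠ p₃ ∧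
      (∀ p : ℝ, q p = 0 ↔ p = p₁ ∨ p = p₂ ∨ p = p₃)) ∧
    q 1 = -4 ∧ q (-1) = 4 ∧
    (∀ p : ℝ, q p = 0 → p ≠ 1 ∧ p ≠ -1) ∧
    (b ≠ 0 → ∀ p : ℝ, q p = 0 → p ≠ 0) ∧
    (b ≠ 0 →
      (∀ p : ℝ, P p = p^2 * q p) ∧
      P 0 = 0 ∧ deriv P 0 = 0 ∧ deriv (deriv P) 0 ≠ 0 ∧
      ∃ p₁ p₂ p₃ : ℝ, p₁ ≠ p₂ ∧ p₁ ≠ p₃ ∧ p₂ ≠ p₃ ∧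
        (∀ p : ℝ, p = p₁ ∨ p = p₂ ∨ p = p₃ →
          P p = 0 ∧ deriv P p ≠ 0 ∧ p ≠ -1 ∧ p ≠ 0 ∧ p ≠ 1) ∧
        (∀ p : ℝ, P p = 0 ↔ p = 0 ∨ p = p₁ ∨ p = p₂ ∨ p = p₃)) := by
  obtain ⟨p₁, p₂, p₃, hlt1, hlt2, hlt2', hlt3, hs1, hs2, hfac⟩ := E34_cubic_roots b
  have h12 : p₁ ≠ p₂ := by intro h; rw [h] at hlt1; linarith
  have h13 : p₁ ≠ p₃ := by intro h; rw [h] at hlt1; linarith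
  have h23 : p₂ ≠ p₃ := by intro h; rw [h] at hlt2'; linarith
  have hiff : ∀ p : ℝ, q p = 0 ↔ p = p₁ ∨ p = p₂ ∨ p = p₃ := by
    intro p
    simp only [hq]
    rw [hfac p, mul_eq_zero, mul_eq_zero, sub_eq_zero, sub_eq_zero, sub_eq_zero, or_assoc]
  have hc₁ : p₁^3 - b*p₁^2 - 5*p₁ + b = 0 := by linear_combination hfac p₁
  have hc₂ : p₂^3 - b*p₂^2 - 5*p₂ + b = 0 := by linear_combination hfac p₂
  have hc₃ : p₃^3 - b*p₃^2 - 5*p₃ + b = 0 := by linear_combination hfac p₃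
  refine ⟨fun p => by ring, by positivity, ⟨p₁, p₂, p₃, h12, h13, h23, hiff⟩,
    by simp only [hq]; ring, by simp only [hq]; ring, ?_, ?_, ?_⟩
  · intro p hp
    rcases (hiff p).mp hp with h | h | h <;>
      exact ⟨by rintro rfl; linarith, by rintro rfl; linarith⟩
  · intro hb p hp h0
    rw [h0] at hp
    simp only [hq] at hp
    apply hb
    linarith [hp]
  · intro hb
    have hPeq : P = fun p : ℝ => p^5 - b*p^4 - 5*p^3 + b*p^2 := by
      rw [hP]; funext p; ring
    have hP2q : ∀ p : ℝ, P p = p^2 * q p := by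
      intro p; simp only [hPeq, hq]; ring
    have hd : deriv P = fun x : ℝ => 5*x^4 - 4*b*x^3 - 15*x^2 + 2*b*x := by
      funext x; rw [hPeq]; exact (E34_hasDerivAt b x).deriv
    have hne0 : ∀ p : ℝ, q p = 0 → p ≠ 0 := by
      intro p hp h0
      rw [h0] at hp
      simp only [hq] at hp
      apply hb; linarith [hp]
    have hq₂ : q p₂ = 0 := (hiff p₂).mpr (Or.inr (Or.inl rfl))
    have hp₂0 : p₂ ≠ 0 := hne0 p₂ hq₂
    have key : ∀ r s t : ℝ, r + s + t = b → r*s + r*t + s*t = -5 →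
        r^3 - b*r^2 - 5*r + b = 0 →
        5*r^4 - 4*b*r^3 - 15*r^2 + 2*b*r = r^2*((r-s)*(r-t)) := by
      intro r s t hA hB hC
      linear_combination 2*r*hC - r^2*hB + 2*r^3*hA
    refine ⟨hP2q, by simp [hPeq], by rw [hd]; norm_num, ?_, p₁, p₂, p₃, h12, h13, h23, ?_, ?_⟩
    · rw [hd]
      rw [(E34_hasDerivAt2 b 0).deriv]
      simpa using hb
    · intro p hp
      have hder : deriv P p ≠ 0 := by
        rw [hd]
        show 5*p^4 - 4*b*p^3 - 15*p^2 + 2*b*p ≠ 0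
        rcases hp with rfl | rfl | rfl
        · rw [key p p₂ p₃ hs1 hs2 hc₁]
          exact mul_ne_zero (pow_ne_zero _ (by intro h; rw [h] at hlt1; linarith))
            (mul_ne_zero (sub_ne_zero.mpr h12) (sub_ne_zero.mpr h13))
        · rw [key p p₁ p₃ (by linear_combination hs1) (by linear_combination hs2) hc₂]
          exact mul_ne_zero (pow_ne_zero _ hp₂0)
            (mul_ne_zero (sub_ne_zero.mpr (Ne.symm h12)) (sub_ne_zero.mpr h23))
        · rw [key p p₁ p₂ (by linear_combination hs1) (by linear_combination hs2) hc₃]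
          exact mul_ne_zero (pow_ne_zero _ (by intro h; rw [h] at hlt3; linarith))
            (mul_ne_zero (sub_ne_zero.mpr (Ne.symm h13)) (sub_ne_zero.mpr (Ne.symm h23)))
      have hval : P p = 0 := by
        rw [hP2q p, (hiff p).mpr hp]; ring
      rcases hp with rfl | rfl | rfl
      · exact ⟨hval, hder, by intro h; rw [h] at hlt1; linarith,
          by intro h; rw [h] at hlt1; linarith, by intro h; rw [h] at hlt1; linarith⟩
      · exact ⟨hval, hder, by intro h; rw [h] at hlt2; linarith, hp₂0,
          by intro h; rw [h] at hlt2'; linarith⟩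
      · exact ⟨hval, hder, by intro h; rw [h] at hlt3; linarith,
          by intro h; rw [h] at hlt3; linarith, by intro h; rw [h] at hlt3; linarith⟩
    · intro p
      rw [hP2q p, mul_eq_zero, pow_eq_zero_iff (by norm_num : 2 ≠ 0), hiff p]
end

section
/- Let b, p be real numbers with p² ≠ 1 and p⁴ − 6p² + 1 + bp(1 − p²) = 0. Then −p(−4p³ + 3bp² + 12p − b) = (p² + 1)³/(p² − 1) and −1 + 18p² − 5p⁴ − 2bp + 4bp³ = −(p² + 1)³/(p² − 1); in particular these two quantities are nonzero and their product is strictly negative. -/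
/-- Claim 15 (type `E¹₄₅`): at a root `p` of
`S(p) = p⁴ − 6p² + 1 + bp(1 − p²)` with `p² ≠ 1`, the eigenvalues
`λ₁ = −p(−4p³ + 3bp² + 12p − b)` and `λ₂ = −1 + 18p² − 5p⁴ − 2bp + 4bp³`
satisfy `λ₁ = (p²+1)³/(p²−1) = −λ₂`; in particular both are nonzero and
their product is strictly negative. -/
theorem E45_critical_points_are_saddles (b p : ℝ) (hp : p^2 ≠ 1)
    (hroot : p^4 - 6*p^2 + 1 + b*p*(1 - p^2) = 0) :
    -p*(-4*p^3 + 3*b*p^2 + 12*p - b) = (p^2 + 1)^3 / (p^2 - 1) ∧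
    -1 + 18*p^2 - 5*p^4 - 2*b*p + 4*b*p^3 = -((p^2 + 1)^3 / (p^2 - 1)) ∧
    -p*(-4*p^3 + 3*b*p^2 + 12*p - b) ≠ 0 ∧
    -1 + 18*p^2 - 5*p^4 - 2*b*p + 4*b*p^3 ≠ 0 ∧
    (-p*(-4*p^3 + 3*b*p^2 + 12*p - b)) * (-1 + 18*p^2 - 5*p^4 - 2*b*p + 4*b*p^3) < 0 := by
  have h1 : p^2 - 1 ≠ 0 := fun h => hp (by linarith [sub_eq_zero.mp h])
  have hA : -p*(-4*p^3 + 3*b*p^2 + 12*p - b) = (p^2 + 1)^3 / (p^2 - 1) := by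
    rw [eq_div_iff h1]
    linear_combination (3*p^2 - 1) * hroot
  have hsum : (-p*(-4*p^3 + 3*b*p^2 + 12*p - b)) +
      (-1 + 18*p^2 - 5*p^4 - 2*b*p + 4*b*p^3) = 0 := by
    linear_combination -hroot
  have hB : -1 + 18*p^2 - 5*p^4 - 2*b*p + 4*b*p^3 = -((p^2 + 1)^3 / (p^2 - 1)) := by
    rw [← hA]; linarith
  have hne : (p^2 + 1)^3 / (p^2 - 1) ≠ 0 :=
    div_ne_zero (by positivity) h1
  refine ⟨hA, hB, ?_, ?_, ?_⟩
  · rw [hA]; exact hne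
  · rw [hB]; simpa using hne
  · rw [hA, hB]
    nlinarith [mul_self_pos.mpr hne]
end
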